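/- Let λ be a weakly decreasing tuple of nonnegative integers of length n > 2, λ' = (λ_2,…,λ_n), α = λ + ρ_n, α' = (α_2,…,α_n), and let u be a nonnegative integer. Assume the inductive hypothesis: P_{λ'}(x;t) · ∏_{a=2}^{n−1}(x_1 − q x_a) = Σ_{μ ∈ GT_2(α')} M(α';μ) · x_1^{|α'|−|μ|} · ζ(P_{μ−ρ_{n−2}}(x;t)). Then Σ_{μ ∈ GT_2(α')} M(α';μ) · x_1^{|α'|−|μ|} · ζ(P_{(u)⌢(μ−ρ_{n−2})}(x;t)) = Σ_{i=2}^n x_i^u · ∏_{2≤a≤n, a≠i}(x_i − t x_a)/(x_i − x_a) · ζ_i(P_{λ'}(x;t)) · ∏_{2≤a≤n, a≠i}(x_1 − q x_a), where (u)⌢ν denotes the concatenation of (u) with the tuple ν. -/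

import Mathlib

open MvPolynomial Finset

noncomputable section

abbrev Rr : Type := MvPolynomial (Fin 2 ⊕ ℕ) ℚ

abbrev F : Type := FractionRing Rr

/-- The variable `q`. -/
def q : F := algebraMap Rr F (X (Sum.inl 0))

/-- The variable `t`. -/
def t : F := algebraMap Rr F (X (Sum.inl 1))

/-- `x k` is the variable `x_{k+1}` of the paper (0-indexed). -/
def x (k : ℕ) : F := algebraMap Rr F (X (Sum.inr k))

/-- Substitution endomorphism of `F` induced by an injective map of variables. -/
def subF (g : Fin 2 ⊕ ℕ → Fin 2 ⊕ ℕ) (hg : Function.Injective g) : F →+* F :=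
  IsFractionRing.lift (g := (algebraMap Rr F).comp (rename g).toRingHom)
    (by
      rw [RingHom.coe_comp]
      exact (IsFractionRing.injective Rr F).comp (rename_injective g hg))

def permNat (n : ℕ) (σ : Equiv.Perm (Fin n)) : ℕ → ℕ :=
  fun k => if h : k < n then (σ ⟨k, h⟩ : ℕ) else k

lemma permNat_inj (n : ℕ) (σ : Equiv.Perm (Fin n)) : Function.Injective (permNat n σ) := by
  intro a b hab
  unfold permNat at hab
  split_ifs at hab with h1 h2 h2
  · have := σ.injective (Fin.val_injective hab)
    exact congrArg Fin.val this
  · have := (σ ⟨a, h1⟩).isLt; omega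
  · have := (σ ⟨b, h2⟩).isLt; omega
  · exact hab

/-- The action of a permutation `σ ∈ S_n` on `F`, permuting `x_1, …, x_n`. -/
def pact (n : ℕ) (σ : Equiv.Perm (Fin n)) : F →+* F :=
  subF (Sum.map id (permNat n σ)) (Function.injective_id.sumMap (permNat_inj n σ))

def shiftNat (i : ℕ) : ℕ → ℕ := fun k => if k < i then k else k + 1

lemma shiftNat_inj (i : ℕ) : Function.Injective (shiftNat i) := by
  intro a b; unfold shiftNat; split_ifs <;> omega

/-- `zeta i` is the endomorphism `ζ_{i+1}` of the paper: it fixes `q`, `t` and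
`x k` for `k < i`, and sends `x k` to `x (k+1)` for `k ≥ i` (0-indexed). -/
def zeta (i : ℕ) : F →+* F :=
  subF (Sum.map id (shiftNat i)) (Function.injective_id.sumMap (shiftNat_inj i))

/-- `zetaP i j` is `ζ_{i+1,j+1}` of the paper. -/
def zetaP (i j : ℕ) : F →+* F := (zeta (max i j)).comp (zeta (min i j))

/-- The Hall–Littlewood polynomial `P_λ(x; t)` in `n` variables. -/
def HL (n : ℕ) (lam : Fin n → ℕ) : F :=
  ∑ σ : Equiv.Perm (Fin n), pact n σ
    ((∏ i : Fin n, x i.val ^ lam i) *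
      ∏ i : Fin n, ∏ j ∈ Finset.Ioi i, (x i.val - t * x j.val) / (x i.val - x j.val))

/-- `ρ_n`, 0-indexed: `rho n i = n - 1 - i`. -/
def rho (n : ℕ) : Fin n → ℕ := fun i => n - 1 - i.val

/-- The deformed Weyl denominator `Δ_n(c) = ∏_{i<j} (x_i - c x_j)`. -/
def DeltaQ (n : ℕ) (c : F) : F := ∏ i : Fin n, ∏ j ∈ Finset.Ioi i, (x i.val - c * x j.val)

/-- The Schur polynomial `s_λ(x) = Σ_σ σ(x^{λ+ρ}/Δ_n)`. -/
def Schur (n : ℕ) (lam : Fin n → ℕ) : F :=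
  ∑ σ : Equiv.Perm (Fin n), pact n σ
    ((∏ i : Fin n, x i.val ^ (lam i + rho n i)) / DeltaQ n 1)

/-- `GT2 n α` is the set of tuples `μ` of length `n` with `α_{i+1} ≤ μ_i ≤ α_i`. -/
def GT2 (n : ℕ) (α : Fin (n+1) → ℕ) : Finset (Fin n → ℕ) :=
  Fintype.piFinset (fun i => Finset.Icc (α i.succ) (α i.castSucc))

def GLw (y a : ℕ) : F := if y = a then -q else if y + 1 = a then t else 0

def GRw (y b : ℕ) : F := if y = b then 1 else if y = b + 1 then -q * t else 0

/-- `w(μ_j)` where `a1 = α_j`, `a2 = α_{j+1}`, `m = μ_j`. -/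
def wgt (a1 a2 m : ℕ) : F :=
  (if m = a1 ∨ m = a2 then 0 else (1 - q) * (1 - t)) + GLw m a1 + GRw m a2

/-- The tridiagonal determinant `M(α; μ)`. -/
def Mdet (n : ℕ) (α : Fin (n+1) → ℕ) (μ : Fin n → ℕ) : F :=
  Matrix.det (Matrix.of fun i j : Fin n =>
    if i = j then wgt (α i.castSucc) (α i.succ) (μ i)
    else if (i : ℕ) + 1 = (j : ℕ) then 1
    else if (j : ℕ) + 1 = (i : ℕ) then GRw (μ j) (α i.castSucc) * GLw (μ i) (α i.castSucc)
    else 0)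

def tot {n : ℕ} (f : Fin n → ℕ) : ℕ := ∑ i, f i


/-! Sorting the permutations of `S_{n+1}` by the image of `1` expands a Hall–Littlewood
polynomial along its first part:
`P_{(u)⌢ν} = Σ_i x_i^u ∏_{a≠i} (x_i - t x_a)/(x_i - x_a) · ζ_i P_ν`.
Apply `ζ` to this expansion inside the left-hand side and exchange the two sums. For `i ≥ 2` the
endomorphism `ζ_i` fixes `M(α';μ)` and `x_1`, so it comes out of the sum over `μ`, which is then
the inductive hypothesis; finally `ζ_i` turns `∏_{a=2}^{n-1} (x_1 - q x_a)` into
`∏_{2≤a≤n, a≠i} (x_1 - q x_a)`. -/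

section Substitution

lemma subF_algebraMap (g : Fin 2 ⊕ ℕ → Fin 2 ⊕ ℕ) (hg : Function.Injective g) (p : Rr) :
    subF g hg (algebraMap Rr F p) = algebraMap Rr F (rename g p) :=
  IsFractionRing.lift_algebraMap _ p

lemma subF_comp (g₁ g₂ : Fin 2 ⊕ ℕ → Fin 2 ⊕ ℕ) (h₁ : Function.Injective g₁)
    (h₂ : Function.Injective g₂) :
    (subF g₁ h₁).comp (subF g₂ h₂) = subF (g₁ ∘ g₂) (h₁.comp h₂) := by
  apply IsLocalization.ringHom_ext (nonZeroDivisors Rr)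
  ext p
  all_goals simp only [RingHom.comp_apply, subF_algebraMap, rename_rename]

variable {f : ℕ → ℕ}

lemma subF_sumMap_q (hf : Function.Injective (Sum.map id f : Fin 2 ⊕ ℕ → Fin 2 ⊕ ℕ)) :
    subF (Sum.map id f) hf q = q := by
  rw [q, subF_algebraMap, rename_X]; rfl

lemma subF_sumMap_t (hf : Function.Injective (Sum.map id f : Fin 2 ⊕ ℕ → Fin 2 ⊕ ℕ)) :
    subF (Sum.map id f) hf t = t := by
  rw [t, subF_algebraMap, rename_X]; rfl

lemma subF_sumMap_x (hf : Function.Injective (Sum.map id f : Fin 2 ⊕ ℕ → Fin 2 ⊕ ℕ)) (k : ℕ) :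
    subF (Sum.map id f) hf (x k) = x (f k) := by
  rw [x, subF_algebraMap, rename_X]; rfl

lemma subF_sumMap_comp_comm {f₁ f₂ g₁ g₂ : ℕ → ℕ}
    (hf₁ : Function.Injective (Sum.map id f₁ : Fin 2 ⊕ ℕ → Fin 2 ⊕ ℕ))
    (hf₂ : Function.Injective (Sum.map id f₂ : Fin 2 ⊕ ℕ → Fin 2 ⊕ ℕ))
    (hg₁ : Function.Injective (Sum.map id g₁ : Fin 2 ⊕ ℕ → Fin 2 ⊕ ℕ))
    (hg₂ : Function.Injective (Sum.map id g₂ : Fin 2 ⊕ ℕ → Fin 2 ⊕ ℕ))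
    (h : f₁ ∘ f₂ = g₁ ∘ g₂) :
    (subF _ hf₁).comp (subF _ hf₂) = (subF _ hg₁).comp (subF _ hg₂) := by
  rw [subF_comp, subF_comp]
  congr 1
  rw [Sum.map_comp_map, Sum.map_comp_map, h]

end Substitution

lemma zeta_q (i : ℕ) : zeta i q = q := subF_sumMap_q _

lemma zeta_t (i : ℕ) : zeta i t = t := subF_sumMap_t _

lemma zeta_x (i k : ℕ) : zeta i (x k) = x (shiftNat i k) := subF_sumMap_x _ k

lemma pact_t (n : ℕ) (σ : Equiv.Perm (Fin n)) : pact n σ t = t := subF_sumMap_t _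

lemma pact_x (n : ℕ) (σ : Equiv.Perm (Fin n)) (k : ℕ) : pact n σ (x k) = x (permNat n σ k) :=
  subF_sumMap_x _ k

lemma shiftNat_zero (k : ℕ) : shiftNat 0 k = k + 1 := rfl

lemma shiftNat_of_lt {i k : ℕ} (h : k < i) : shiftNat i k = k := if_pos h

lemma permNat_val {n : ℕ} (σ : Equiv.Perm (Fin n)) (k : Fin n) : permNat n σ k = σ k :=
  dif_pos k.isLt

lemma zeta_zero_comp_zeta (i : ℕ) : (zeta 0).comp (zeta i) = (zeta (i + 1)).comp (zeta 0) :=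
  subF_sumMap_comp_comm _ _ _ _ <| by
    funext k
    simp only [Function.comp_apply, shiftNat]
    split_ifs <;> omega

section FixedCoefficients

variable {φ : F →+* F}

lemma map_GLw (hq : φ q = q) (ht : φ t = t) (y a : ℕ) : φ (GLw y a) = GLw y a := by
  unfold GLw; split_ifs <;> simp [hq, ht]

lemma map_GRw (hq : φ q = q) (ht : φ t = t) (y b : ℕ) : φ (GRw y b) = GRw y b := by
  unfold GRw; split_ifs <;> simp [hq, ht]

lemma map_wgt (hq : φ q = q) (ht : φ t = t) (a₁ a₂ k : ℕ) : φ (wgt a₁ a₂ k) = wgt a₁ a₂ k := by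
  unfold wgt
  rw [map_add, map_add, map_GLw hq ht, map_GRw hq ht]
  split_ifs <;> simp [hq, ht]

lemma map_Mdet (hq : φ q = q) (ht : φ t = t) (n : ℕ) (α : Fin (n + 1) → ℕ) (μ : Fin n → ℕ) :
    φ (Mdet n α μ) = Mdet n α μ := by
  rw [Mdet, RingHom.map_det]
  congr 1
  ext a b
  simp only [RingHom.mapMatrix_apply, Matrix.map_apply, Matrix.of_apply]
  split_ifs <;> simp [map_wgt hq ht, map_GRw hq ht, map_GLw hq ht]

end FixedCoefficients

def hlCoeff (s : Finset ℕ) (u i : ℕ) : F :=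
  x i ^ u * ∏ a ∈ s.erase i, (x i - t * x a) / (x i - x a)

lemma map_hlCoeff {φ : F →+* F} (e : ℕ ↪ ℕ) (ht : φ t = t) (hx : ∀ k, φ (x k) = x (e k))
    (s : Finset ℕ) (u i : ℕ) : φ (hlCoeff s u i) = hlCoeff (s.map e) u (e i) := by
  simp only [hlCoeff, map_mul, map_pow, map_prod, map_div₀, map_sub, ht, hx, ← map_erase,
    prod_map]

def hlTerm (n : ℕ) (lam : Fin n → ℕ) : F :=
  (∏ i : Fin n, x i.val ^ lam i) *
    ∏ i : Fin n, ∏ j ∈ Finset.Ioi i, (x i.val - t * x j.val) / (x i.val - x j.val)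

lemma HL_eq_sum_hlTerm (n : ℕ) (lam : Fin n → ℕ) :
    HL n lam = ∑ σ : Equiv.Perm (Fin n), pact n σ (hlTerm n lam) := rfl

lemma prod_Ioi_zero_eq_prod_range_erase (n : ℕ) (g : ℕ → F) :
    ∏ j ∈ Ioi (0 : Fin (n + 1)), g j = ∏ a ∈ (range (n + 1)).erase 0, g a := by
  have hIoi : (range (n + 1)).erase 0 = (Ioi (0 : Fin (n + 1))).map Fin.valEmbedding := by
    rw [Fin.map_valEmbedding_Ioi]
    ext a
    simp only [Fin.val_zero, mem_Ioo, mem_erase, mem_range]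
    omega
  rw [hIoi, prod_map]
  rfl

lemma hlTerm_cons (n u : ℕ) (ν : Fin n → ℕ) :
    hlTerm (n + 1) (Fin.cons u ν) = hlCoeff (range (n + 1)) u 0 * zeta 0 (hlTerm n ν) := by
  rw [hlTerm, hlTerm, hlCoeff, Fin.prod_univ_succ, Fin.prod_univ_succ]
  simp only [Fin.cons_zero, Fin.cons_succ, Fin.val_zero, Fin.val_succ, Fin.prod_Ioi_succ,
    map_mul, map_prod, map_pow, map_div₀, map_sub, zeta_x, shiftNat_zero, zeta_t]
  rw [prod_Ioi_zero_eq_prod_range_erase n (fun a => (x 0 - t * x a) / (x 0 - x a))]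
  ring

def insPerm {n : ℕ} (i : Fin (n + 1)) (τ : Equiv.Perm (Fin n)) : Equiv.Perm (Fin (n + 1)) :=
  ((finSuccEquiv' 0).trans (Equiv.optionCongr τ)).trans (finSuccEquiv' i).symm

lemma insPerm_zero {n : ℕ} (i : Fin (n + 1)) (τ : Equiv.Perm (Fin n)) : insPerm i τ 0 = i := by
  simp [insPerm, finSuccEquiv'_zero]

lemma insPerm_succ {n : ℕ} (i : Fin (n + 1)) (τ : Equiv.Perm (Fin n)) (k : Fin n) :
    insPerm i τ k.succ = i.succAbove (τ k) := by
  have h : finSuccEquiv' (0 : Fin (n + 1)) k.succ = some k := by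
    rw [← Fin.succAbove_zero, finSuccEquiv'_succAbove]
  simp [insPerm, h]

lemma insPerm_bijective (n : ℕ) :
    Function.Bijective (fun p : Fin (n + 1) × Equiv.Perm (Fin n) => insPerm p.1 p.2) := by
  rw [Fintype.bijective_iff_injective_and_card]
  refine ⟨fun ⟨i, τ⟩ ⟨i', τ'⟩ h => ?_, by simp [Fintype.card_perm, Nat.factorial_succ]⟩
  obtain rfl : i = i' := by
    simpa only [insPerm_zero] using DFunLike.congr_fun h 0
  refine Prod.ext rfl (Equiv.ext fun k => i.succAbove_right_injective ?_)
  simpa only [insPerm_succ] using DFunLike.congr_fun h k.succ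

lemma permNat_insPerm_comp (n : ℕ) (i : Fin (n + 1)) (τ : Equiv.Perm (Fin n)) :
    permNat (n + 1) (insPerm i τ) ∘ shiftNat 0 = shiftNat i ∘ permNat n τ := by
  funext k
  simp only [Function.comp_apply, shiftNat_zero]
  by_cases hk : k < n
  · have hsucc := permNat_val (insPerm i τ) (Fin.succ ⟨k, hk⟩)
    rw [Fin.val_succ] at hsucc
    rw [hsucc, insPerm_succ, permNat_val τ ⟨k, hk⟩]
    simp only [Fin.succAbove, shiftNat, Fin.lt_def]
    split_ifs <;> simp_all
  · have hi := i.isLt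
    simp only [permNat, shiftNat, dif_neg hk, dif_neg (by omega : ¬k + 1 < n + 1)]
    split_ifs <;> omega

lemma pact_insPerm_comp_zeta (n : ℕ) (i : Fin (n + 1)) (τ : Equiv.Perm (Fin n)) :
    (pact (n + 1) (insPerm i τ)).comp (zeta 0) = (zeta i).comp (pact n τ) :=
  subF_sumMap_comp_comm _ _ _ _ (permNat_insPerm_comp n i τ)

lemma map_range_permNat (n : ℕ) (σ : Equiv.Perm (Fin n)) :
    (range n).map ⟨permNat n σ, permNat_inj n σ⟩ = range n := by
  refine eq_of_subset_of_card_le (fun b hb => ?_) (by rw [card_map])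
  obtain ⟨k, hk, rfl⟩ := mem_map.1 hb
  have hk' := mem_range.1 hk
  rw [Function.Embedding.coeFn_mk, mem_range, permNat_val σ ⟨k, hk'⟩]
  exact (σ _).isLt

lemma pact_insPerm_hlCoeff (n u : ℕ) (i : Fin (n + 1)) (τ : Equiv.Perm (Fin n)) :
    pact (n + 1) (insPerm i τ) (hlCoeff (range (n + 1)) u 0) = hlCoeff (range (n + 1)) u i := by
  have h0 : permNat (n + 1) (insPerm i τ) 0 = i := by
    simpa only [insPerm_zero, Fin.val_zero] using permNat_val (insPerm i τ) 0
  rw [map_hlCoeff ⟨_, permNat_inj _ _⟩ (pact_t _ _) (pact_x _ _), map_range_permNat]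
  exact congrArg _ h0

lemma HL_cons (n u : ℕ) (ν : Fin n → ℕ) :
    HL (n + 1) (Fin.cons u ν) =
      ∑ i : Fin (n + 1), hlCoeff (range (n + 1)) u i * zeta i (HL n ν) := by
  rw [HL_eq_sum_hlTerm, ← (insPerm_bijective n).sum_comp, Fintype.sum_prod_type]
  refine sum_congr rfl fun i _ => ?_
  simp only [HL_eq_sum_hlTerm, hlTerm_cons, map_mul, map_sum, mul_sum, pact_insPerm_hlCoeff]
  refine sum_congr rfl fun τ _ => ?_
  rw [← RingHom.comp_apply, pact_insPerm_comp_zeta, RingHom.comp_apply]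

lemma map_range_shiftNat_zero (n : ℕ) : (range n).map ⟨shiftNat 0, shiftNat_inj 0⟩ = Icc 1 n := by
  change (range n).map (addRightEmbedding 1) = _
  rw [range_eq_Ico, map_add_right_Ico, zero_add, Ico_add_one_right_eq_Icc]

lemma zeta_zero_HL_cons (n u : ℕ) (ν : Fin n → ℕ) :
    zeta 0 (HL (n + 1) (Fin.cons u ν)) =
      ∑ i ∈ Icc 1 (n + 1), hlCoeff (Icc 1 (n + 1)) u i * zeta i (zeta 0 (HL n ν)) := by
  let e : ℕ ↪ ℕ := ⟨shiftNat 0, shiftNat_inj 0⟩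
  have hterm : ∀ i, zeta 0 (hlCoeff (range (n + 1)) u i * zeta i (HL n ν)) =
      hlCoeff ((range (n + 1)).map e) u (e i) * zeta (e i) (zeta 0 (HL n ν)) := fun i => by
    rw [map_mul, map_hlCoeff e (zeta_t 0) (zeta_x 0), ← RingHom.comp_apply, zeta_zero_comp_zeta,
      RingHom.comp_apply]
    rfl
  rw [HL_cons, map_sum,
    Fin.sum_univ_eq_sum_range (fun i => zeta 0 (hlCoeff (range (n + 1)) u i * zeta i (HL n ν))),
    ← map_range_shiftNat_zero, sum_map]
  exact sum_congr rfl fun i _ => hterm i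

lemma map_shiftNat_Icc {N i : ℕ} (hi₁ : 1 ≤ i) (hi₂ : i ≤ N + 1) :
    (Icc 1 N).map ⟨shiftNat i, shiftNat_inj i⟩ = (Icc 1 (N + 1)).erase i := by
  ext b
  simp only [mem_map, mem_Icc, mem_erase, Function.Embedding.coeFn_mk, shiftNat]
  constructor
  · rintro ⟨a, ha, rfl⟩
    split_ifs <;> omega
  · rintro ⟨hb, hb₁, hb₂⟩
    by_cases hbi : b < i
    · exact ⟨b, by omega, if_pos hbi⟩
    · exact ⟨b - 1, by omega, by rw [if_neg (by omega)]; omega⟩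

lemma zeta_prod_Icc_sub_q_mul {N i : ℕ} (hi₁ : 1 ≤ i) (hi₂ : i ≤ N + 1) :
    zeta i (∏ a ∈ Icc 1 N, (x 0 - q * x a)) = ∏ a ∈ (Icc 1 (N + 1)).erase i, (x 0 - q * x a) := by
  simp only [map_prod, map_sub, map_mul, zeta_q, zeta_x, shiftNat_of_lt (by omega : 0 < i)]
  rw [← map_shiftNat_Icc hi₁ hi₂, prod_map]
  rfl

lemma zeta_Mdet_mul_x_zero_pow {i : ℕ} (hi : 0 < i) (n : ℕ) (α : Fin (n + 1) → ℕ)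
    (μ : Fin n → ℕ) (e : ℕ) (y : F) :
    zeta i (Mdet n α μ * x 0 ^ e * y) = Mdet n α μ * x 0 ^ e * zeta i y := by
  rw [map_mul, map_mul, map_Mdet (zeta_q i) (zeta_t i), map_pow, zeta_x, shiftNat_of_lt hi]

theorem lemma_GT1_general (m : ℕ) (lam : Fin (m + 3) → ℕ) (u : ℕ)
    (IH : HL (m + 2) (fun j => lam j.succ) * ∏ a ∈ Finset.Icc 1 (m + 1), (x 0 - q * x a) =
      ∑ μ ∈ GT2 (m + 1) (fun i => lam i.succ + rho (m + 3) i.succ),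
        Mdet (m + 1) (fun i => lam i.succ + rho (m + 3) i.succ) μ *
          x 0 ^ (tot (fun i : Fin (m + 2) => lam i.succ + rho (m + 3) i.succ) - tot μ) *
          zeta 0 (HL (m + 1) (fun i => μ i - rho (m + 1) i))) :
    ∑ μ ∈ GT2 (m + 1) (fun i => lam i.succ + rho (m + 3) i.succ),
        Mdet (m + 1) (fun i => lam i.succ + rho (m + 3) i.succ) μ *
          x 0 ^ (tot (fun i : Fin (m + 2) => lam i.succ + rho (m + 3) i.succ) - tot μ) *
          zeta 0 (HL (m + 2) (Fin.cons u (fun i => μ i - rho (m + 1) i))) =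
      ∑ i ∈ Finset.Icc 1 (m + 2),
        x i ^ u *
        (∏ a ∈ (Finset.Icc 1 (m + 2)).erase i, (x i - t * x a) / (x i - x a)) *
        zeta i (HL (m + 2) (fun j => lam j.succ)) *
        ∏ a ∈ (Finset.Icc 1 (m + 2)).erase i, (x 0 - q * x a) := by
  simp only [zeta_zero_HL_cons, mul_sum]
  rw [sum_comm]
  refine sum_congr rfl fun i hi => ?_
  obtain ⟨hi₁, hi₂⟩ := mem_Icc.1 hi
  simp_rw [mul_left_comm _ (hlCoeff _ u i), ← mul_sum,
    ← zeta_Mdet_mul_x_zero_pow (by omega : 0 < i), ← map_sum, ← IH, map_mul,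
    zeta_prod_Icc_sub_q_mul hi₁ hi₂, hlCoeff]
  ring

/-- **Lemma 4, equation (GT1).** With `λ' = (λ_2,…,λ_n)`, `α' = (α_2,…,α_n)`
(where `α = λ + ρ_n`), assuming the inductive hypothesis, one has
`F_{λ'}(u) = Σ_{i=2}^n x_i^u ∏_{2≤a≤n, a≠i}(x_i-t x_a)/(x_i-x_a) ζ_i(P_{λ'}) ∏_{2≤a≤n, a≠i}(x_1-q x_a)`. -/
theorem lemma_GT1 (m : ℕ) (lam : Fin (m + 3) → ℕ)
    (hlam : ∀ i j : Fin (m + 3), i ≤ j → lam j ≤ lam i) (u : ℕ)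
    (IH : HL (m + 2) (fun j => lam j.succ) * ∏ a ∈ Finset.Icc 1 (m + 1), (x 0 - q * x a) =
      ∑ μ ∈ GT2 (m + 1) (fun i => lam i.succ + rho (m + 3) i.succ),
        Mdet (m + 1) (fun i => lam i.succ + rho (m + 3) i.succ) μ *
          x 0 ^ (tot (fun i : Fin (m + 2) => lam i.succ + rho (m + 3) i.succ) - tot μ) *
          zeta 0 (HL (m + 1) (fun i => μ i - rho (m + 1) i))) :
    ∑ μ ∈ GT2 (m + 1) (fun i => lam i.succ + rho (m + 3) i.succ),
        Mdet (m + 1) (fun i => lam i.succ + rho (m + 3) i.succ) μ *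
          x 0 ^ (tot (fun i : Fin (m + 2) => lam i.succ + rho (m + 3) i.succ) - tot μ) *
          zeta 0 (HL (m + 2) (Fin.cons u (fun i => μ i - rho (m + 1) i))) =
      ∑ i ∈ Finset.Icc 1 (m + 2),
        x i ^ u *
        (∏ a ∈ (Finset.Icc 1 (m + 2)).erase i, (x i - t * x a) / (x i - x a)) *
        zeta i (HL (m + 2) (fun j => lam j.succ)) *
        ∏ a ∈ (Finset.Icc 1 (m + 2)).erase i, (x 0 - q * x a) :=
  lemma_GT1_general m lam u IH

end
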